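/- Let m ≥ 1 and B be positive integers and a_1, …, a_{3m} be positive integers with B/4 < a_i < B/2 for all i and Σ_{i=1}^{3m} a_i = mB. If there exists a schedule of the reduction tree T(a, B) on p = 3mB processors whose makespan is at most 2m+1 and whose peak memory is at most 3mB + 3m, then there exists a partition of {1, …, 3m} into m pairwise disjoint triples S_1, …, S_m such that Σ_{i ∈ S_k} a_i = B for every k. (Together with the converse direction, this reduction from 3-Partition shows that deciding whether a tree admits a schedule meeting given makespan and memory bounds is NP-complete, even in the pebble-game model.) -/

import Mathlib

/-- A finite rooted in-tree: every node has a parent (the root is its own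
parent), and a rank function witnesses that following parents strictly
decreases towards the root, so every node has a unique path to the root. -/
structure InTree where
  V : Type
  [fin : Fintype V]
  [deq : DecidableEq V]
  root : V
  parent : V → V
  parent_root : parent root = root
  rk : V → ℕ
  rk_lt : ∀ v, v ≠ root → rk (parent v) < rk v
  rk_root : ∀ v, rk v = 0 → v = root

attribute [instance] InTree.fin InTree.deq

/-- A schedule of `T` on `p` processors: at most `p` tasks per unit time step,
and every non-root task finishes before its parent starts. -/
def InTree.IsSchedule (T : InTree) (p : ℕ) (t : T.V → ℕ) : Prop :=
  (∀ s : ℕ, (Finset.univ.filter (fun i => t i = s)).card ≤ p) ∧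
  (∀ i : T.V, i ≠ T.root → t i + 1 ≤ t (T.parent i))

/-- Makespan of a schedule: `max_i (t i + 1)`. -/
def InTree.makespan (T : InTree) (t : T.V → ℕ) : ℕ :=
  Finset.univ.sup (fun i => t i + 1)

/-- Memory used at step `s`: number of nodes `i` with `t i ≤ s` that are the
root or whose parent has not finished before step `s`. -/
def InTree.memAt (T : InTree) (t : T.V → ℕ) (s : ℕ) : ℕ :=
  (Finset.univ.filter (fun i : T.V => t i ≤ s ∧ (i = T.root ∨ s ≤ t (T.parent i)))).card

/-- Peak memory of a schedule: maximum memory usage over steps `0 ≤ s < makespan`. -/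
def InTree.peakMemory (T : InTree) (t : T.V → ℕ) : ℕ :=
  (Finset.range (T.makespan t)).sup (T.memAt t)


/-- Node set of the 3-Partition reduction tree: a root, the nodes `N i`
(`i < 3m`), and for each `i` the `3m * a i` leaf children of `N i`. -/
abbrev RedV (m : ℕ) (a : Fin (3*m) → ℕ) : Type :=
  Unit ⊕ Fin (3*m) ⊕ (Σ i : Fin (3*m), Fin (3*m * a i))

/-- The reduction tree `T(a, B)`: a root whose children are the `N i`,
each `N i` having exactly `3m * a i` leaf children. -/
def redTree (m : ℕ) (a : Fin (3*m) → ℕ) : InTree where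
  V := RedV m a
  root := Sum.inl ()
  parent := fun v => match v with
    | Sum.inl _ => Sum.inl ()
    | Sum.inr (Sum.inl _) => Sum.inl ()
    | Sum.inr (Sum.inr ⟨i, _⟩) => Sum.inr (Sum.inl i)
  parent_root := rfl
  rk := fun v => match v with
    | Sum.inl _ => 0
    | Sum.inr (Sum.inl _) => 1
    | Sum.inr (Sum.inr _) => 2
  rk_lt := by rintro (u | i | ⟨i, j⟩) h
              · cases u; exact absurd rfl h
              · simp
              · simp
  rk_root := by rintro (u | i | s) h
                · cases u; rfl
                · simp at h
                · simp at h

/-- The node `N i` of the reduction tree. -/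
def Nnode (m : ℕ) (a : Fin (3*m) → ℕ) (i : Fin (3*m)) : (redTree m a).V :=
  Sum.inr (Sum.inl i)

/-!
Let `τ i` be the step of `N i`; every `τ i` is smaller than the step of the root, so `τ i < 2m`.
At a step `s` memory holds the `3m·a_i` leaves of every `N i` with `τ i ∈ {s, s+1}`, and also
every `N i` already computed. Once one `N i` is computed, the bound `3mB + 3m` leaves room for
less than `3m(B+1)` such leaves, so the window `{s, s+1}` has weight at most `B`; if none is
computed yet, the window lies inside the next one. The `m` windows `{2k, 2k+1}` cover all `τ i`
and the total weight is `mB`, so each window weighs exactly `B`, and `B/4 < a_i < B/2` makes it a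
triple.
-/

open Finset

namespace InTree

variable (T : InTree) (t : T.V → ℕ)

lemma lt_makespan (v : T.V) : t v < T.makespan t :=
  Finset.le_sup (f := fun i => t i + 1) (mem_univ v)

lemma memAt_le_peakMemory {s : ℕ} (hs : s < T.makespan t) : T.memAt t s ≤ T.peakMemory t :=
  Finset.le_sup (mem_range.mpr hs)

end InTree

section RedTree

variable {m : ℕ} {a : Fin (3*m) → ℕ} {t : (redTree m a).V → ℕ}

lemma time_Nnode_lt_root
    (hprec : ∀ v, v ≠ (redTree m a).root → t v + 1 ≤ t ((redTree m a).parent v))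
    (i : Fin (3*m)) : t (Nnode m a i) < t (redTree m a).root :=
  hprec (Nnode m a i) Sum.inr_ne_inl

lemma card_add_mul_sum_le_memAt
    (hprec : ∀ v, v ≠ (redTree m a).root → t v + 1 ≤ t ((redTree m a).parent v))
    {s : ℕ} (hs : s ≤ t (redTree m a).root) :
    #{i | t (Nnode m a i) ≤ s} +
      3*m * ∑ i with s ≤ t (Nnode m a i) ∧ t (Nnode m a i) ≤ s + 1, a i ≤
      (redTree m a).memAt t s := by
  set W := ({i | s ≤ t (Nnode m a i) ∧ t (Nnode m a i) ≤ s + 1} : Finset (Fin (3*m)))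
  have hcard : #(({i | t (Nnode m a i) ≤ s} : Finset _).disjSum
      (W.sigma fun i => (univ : Finset (Fin (3*m * a i))))) =
      #{i | t (Nnode m a i) ≤ s} + 3*m * ∑ i ∈ W, a i := by
    simp [card_disjSum, card_sigma, mul_sum]
  rw [← hcard, InTree.memAt]
  refine card_le_card_of_injOn (fun x => (Sum.inr x : (redTree m a).V)) ?_
    Sum.inr_injective.injOn
  rintro (i | ⟨i, j⟩) hv <;> refine mem_filter.mpr ⟨mem_univ _, ?_⟩
  · simp only [mem_coe, inl_mem_disjSum, mem_filter, mem_univ, true_and] at hv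
    exact ⟨hv, Or.inr hs⟩
  · simp only [mem_coe, inr_mem_disjSum, mem_sigma, mem_filter, mem_univ, and_true, true_and,
      W] at hv
    have : t (Sum.inr (Sum.inr ⟨i, j⟩)) < t (Nnode m a i) := hprec _ Sum.inr_ne_inl
    exact ⟨by dsimp only; omega, Or.inr hv.1⟩

end RedTree

lemma sum_window_le {ι : Type*} [Fintype ι] (τ a : ι → ℕ) {K B r : ℕ} (hτ : ∀ i, τ i < r)
    (hmem : ∀ s ≤ r, #{i | τ i ≤ s} + K * ∑ i with s ≤ τ i ∧ τ i ≤ s + 1, a i ≤ K * B + K)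
    (s : ℕ) : ∑ i with s ≤ τ i ∧ τ i ≤ s + 1, a i ≤ B := by
  have key : ∀ s ≤ r, ∀ j, τ j ≤ s → ∑ i with s ≤ τ i ∧ τ i ≤ s + 1, a i ≤ B := by
    intro s hs j hj
    have hpos : 0 < #{i | τ i ≤ s} := card_pos.mpr ⟨j, by simpa using hj⟩
    have := hmem s hs
    by_contra! h
    nlinarith
  by_cases hw : ∃ i, s ≤ τ i ∧ τ i ≤ s + 1
  · obtain ⟨i, hsi, his⟩ := hw
    have hir := hτ i
    by_cases hG : ∃ j, τ j ≤ s
    · obtain ⟨j, hj⟩ := hG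
      exact key s (by omega) j hj
    · calc ∑ i with s ≤ τ i ∧ τ i ≤ s + 1, a i
          ≤ ∑ i with s + 1 ≤ τ i ∧ τ i ≤ s + 1 + 1, a i :=
            sum_le_sum_of_subset <| monotone_filter_right _ fun j hj => by
              have := not_exists.mp hG j; omega
        _ ≤ B := key (s + 1) (by omega) i his
  · rw [filter_false_of_mem fun i _ => not_exists.mp hw i, sum_empty]
    exact Nat.zero_le B

lemma sum_fiberwise_eq_of_le {ι κ : Type*} [Fintype ι] [Fintype κ] [DecidableEq κ] (f : ι → κ)
    (a : ι → ℕ) {B : ℕ} (hle : ∀ k, ∑ i with f i = k, a i ≤ B)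
    (hsum : ∑ i, a i = Fintype.card κ * B) (k : κ) : ∑ i with f i = k, a i = B := by
  have htotal : ∑ k, ∑ i with f i = k, a i = ∑ _k : κ, B := by
    rw [sum_fiberwise, hsum, sum_const, card_univ, smul_eq_mul]
  exact (sum_eq_sum_iff_of_le fun k _ => hle k).mp htotal k (mem_univ k)

lemma card_eq_three_of_sum_eq {ι : Type*} (S : Finset ι) (a : ι → ℕ) {B : ℕ} (hB : 0 < B)
    (ha : ∀ i ∈ S, B < 4 * a i ∧ 2 * a i < B) (hS : ∑ i ∈ S, a i = B) : #S = 3 := by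
  have hupper : #S * (B + 1) ≤ 4 * B := by
    simpa [← hS, mul_sum] using card_nsmul_le_sum S (4 * a ·) (B + 1) fun i hi => (ha i hi).1
  have hlower : 2 * B ≤ #S * (B - 1) := by
    have := sum_le_card_nsmul S (2 * a ·) (B - 1) fun i hi => by have := (ha i hi).2; omega
    simpa [← hS, mul_sum] using this
  have hcard : #S < 4 := by nlinarith
  interval_cases h : #S <;> omega

theorem stmt2_general (m B : ℕ) (hB : 1 ≤ B) (a : Fin (3*m) → ℕ)
    (ha : ∀ i, B < 4 * a i ∧ 2 * a i < B) (hsum : ∑ i, a i = m * B)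
    (hsched : ∃ t : (redTree m a).V → ℕ, (redTree m a).IsSchedule (3*m*B) t ∧
      (redTree m a).makespan t ≤ 2*m + 1 ∧
      (redTree m a).peakMemory t ≤ 3*m*B + 3*m) :
    ∃ S : Fin m → Finset (Fin (3*m)),
      (∀ k, (S k).card = 3) ∧ (∀ i, ∃! k, i ∈ S k) ∧ (∀ k, ∑ i ∈ S k, a i = B) := by
  obtain ⟨t, ⟨-, hprec⟩, hspan, hpeak⟩ := hsched
  have hroot := (redTree m a).lt_makespan t (redTree m a).root
  have hwindow := sum_window_le (fun i => t (Nnode m a i)) a (time_Nnode_lt_root hprec)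
    fun s hs => (card_add_mul_sum_le_memAt hprec hs).trans
      (((redTree m a).memAt_le_peakMemory t (by omega)).trans hpeak)
  let pair : Fin (3*m) → Fin m := fun i =>
    ⟨t (Nnode m a i) / 2, by have := time_Nnode_lt_root hprec i; omega⟩
  have hpair : ∀ k, ∑ i with pair i = k, a i = B := by
    refine sum_fiberwise_eq_of_le pair a (fun k => ?_) (by simpa using hsum)
    convert hwindow (2 * k) using 2
    ext i
    simp only [mem_filter, mem_univ, true_and, pair, Fin.ext_iff]
    omega
  exact ⟨fun k => {i | pair i = k},
    fun k => card_eq_three_of_sum_eq _ a hB (fun i _ => ha i) (hpair k),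
    fun i => ⟨pair i, by simp, fun k hk => (mem_filter.mp hk).2.symm⟩, hpair⟩

/-- If the reduction tree `T(a, B)` admits a schedule on `3mB` processors with
makespan at most `2m+1` and peak memory at most `3mB + 3m`, then the
3-Partition instance has a solution. -/
theorem stmt2 (m B : ℕ) (hm : 1 ≤ m) (hB : 1 ≤ B) (a : Fin (3*m) → ℕ)
    (ha : ∀ i, B < 4 * a i ∧ 2 * a i < B) (hsum : ∑ i, a i = m * B)
    (hsched : ∃ t : (redTree m a).V → ℕ, (redTree m a).IsSchedule (3*m*B) t ∧
      (redTree m a).makespan t ≤ 2*m + 1 ∧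
      (redTree m a).peakMemory t ≤ 3*m*B + 3*m) :
    ∃ S : Fin m → Finset (Fin (3*m)),
      (∀ k, (S k).card = 3) ∧ (∀ i, ∃! k, i ∈ S k) ∧ (∀ k, ∑ i ∈ S k, a i = B) :=
  stmt2_general m B hB a ha hsum hsched
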